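/- arXiv:2509.15691 — 2 statements merged into one kernel-verified Lean document; each statement's English description precedes it below -/
import Mathlib

section
/- Let d and n be natural numbers with d ≥ 1, let W_0, …, W_n be points of ℝ^d, and let c be a real number. Define the Bézier curve P_n(t) := Σ_{i=0}^{n} B^n_i(t) W_i and the subdivided control points V_k := Σ_{i=0}^{k} B^k_i(c) W_i for 0 ≤ k ≤ n. Then for every real number t, Σ_{k=0}^{n} B^n_k(t) V_k = P_n(c·t); that is, the curve with control points V_0, …, V_n parametrizes the left segment P_n([0,c]) when t ranges over [0,1]. -/
/-!
The control points `V k` are the values at `c` of the Bézier curves of the initial control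
polygons `W 0, …, W k`. Expanding both sides in the `W i`, the theorem reduces to the identity
`∑ k, B^n_k(t) B^k_i(c) = B^n_i(c t)`, which is the binomial expansion of
`(1 - c t)^(n-i) = (t (1 - c) + (1 - t))^(n-i)` after `C(n,k) C(k,i) = C(n,i) C(n-i,k-i)`.
-/

open Finset

/-- The `i`-th Bernstein basis polynomial of degree `n`:
`B^n_i(t) = C(n,i) * t^i * (1-t)^(n-i)`. -/
noncomputable def bern (n i : ℕ) (t : ℝ) : ℝ :=
  (n.choose i : ℝ) * t ^ i * (1 - t) ^ (n - i)

lemma bern_eq_zero_of_lt {n i : ℕ} (h : n < i) (t : ℝ) : bern n i t = 0 := by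
  simp [bern, Nat.choose_eq_zero_of_lt h]

lemma bern_add_mul_bern (n i j : ℕ) (c t : ℝ) :
    bern n (i + j) t * bern (i + j) i c =
      (n.choose i : ℝ) * (c * t) ^ i *
        ((t * (1 - c)) ^ j * (1 - t) ^ (n - i - j) * ((n - i).choose j : ℝ)) := by
  have hchoose : (n.choose (i + j) : ℝ) * ((i + j).choose i : ℝ) =
      (n.choose i : ℝ) * ((n - i).choose j : ℝ) := by
    have h := Nat.choose_mul (n := n) (Nat.le_add_right i j)
    rw [Nat.add_sub_cancel_left] at h
    exact_mod_cast h
  rw [bern, bern, Nat.add_sub_cancel_left, ← Nat.sub_sub, mul_pow, mul_pow]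
  linear_combination (t ^ i * t ^ j * (1 - t) ^ (n - i - j) * c ^ i * (1 - c) ^ j) * hchoose

theorem sum_bern_mul_bern {n i : ℕ} (hi : i ≤ n) (c t : ℝ) :
    ∑ k ∈ range (n + 1), bern n k t * bern k i c = bern n i (c * t) := by
  have hlow : ∑ k ∈ range i, bern n k t * bern k i c = 0 :=
    sum_eq_zero fun k hk => by rw [bern_eq_zero_of_lt (mem_range.1 hk), mul_zero]
  calc ∑ k ∈ range (n + 1), bern n k t * bern k i c
      = ∑ j ∈ range (n - i + 1), bern n (i + j) t * bern (i + j) i c := by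
        rw [show n + 1 = i + (n - i + 1) by omega, sum_range_add, hlow, zero_add]
    _ = (n.choose i : ℝ) * (c * t) ^ i *
          ∑ j ∈ range (n - i + 1), (t * (1 - c)) ^ j * (1 - t) ^ (n - i - j) *
            ((n - i).choose j : ℝ) := by
        rw [mul_sum]
        exact sum_congr rfl fun j _ => bern_add_mul_bern n i j c t
    _ = bern n i (c * t) := by
        rw [← add_pow, bern]
        ring_nf

section Bezier

variable {M : Type*} [AddCommGroup M] [Module ℝ M]

noncomputable def bezier (n : ℕ) (W : ℕ → M) (t : ℝ) : M :=
  ∑ i ∈ range (n + 1), bern n i t • W i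

lemma bezier_eq_sum_range_of_le {k m : ℕ} (h : k ≤ m) (W : ℕ → M) (t : ℝ) :
    bezier k W t = ∑ i ∈ range (m + 1), bern k i t • W i := by
  refine sum_subset (range_subset_range.2 (by omega)) fun i _ hi => ?_
  rw [bern_eq_zero_of_lt (by simpa using hi), zero_smul]

theorem bezier_bezier_left (n : ℕ) (W : ℕ → M) (c t : ℝ) :
    bezier n (fun k => bezier k W c) t = bezier n W (c * t) := by
  calc bezier n (fun k => bezier k W c) t
      = ∑ k ∈ range (n + 1), ∑ i ∈ range (n + 1), (bern n k t * bern k i c) • W i := by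
        refine sum_congr rfl fun k hk => ?_
        dsimp only
        rw [bezier_eq_sum_range_of_le (Nat.lt_succ_iff.1 (mem_range.1 hk)), smul_sum]
        simp only [smul_smul]
    _ = bezier n W (c * t) := by
        rw [sum_comm]
        refine sum_congr rfl fun i hi => ?_
        rw [← sum_smul, sum_bern_mul_bern (Nat.lt_succ_iff.1 (mem_range.1 hi))]

end Bezier

theorem bezier_left_segment_general
    (d n : ℕ) (W : ℕ → (Fin d → ℝ)) (c : ℝ)
    (P : ℝ → (Fin d → ℝ))
    (hP : ∀ t : ℝ, P t = ∑ i ∈ Finset.range (n + 1), bern n i t • W i)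
    (V : ℕ → (Fin d → ℝ))
    (hV : ∀ k ≤ n, V k = ∑ i ∈ Finset.range (k + 1), bern k i c • W i) :
    ∀ t : ℝ, ∑ k ∈ Finset.range (n + 1), bern n k t • V k = P (c * t) := by
  intro t
  calc ∑ k ∈ range (n + 1), bern n k t • V k = bezier n (fun k => bezier k W c) t :=
        sum_congr rfl fun k hk => by rw [hV k (Nat.lt_succ_iff.1 (mem_range.1 hk))]; rfl
    _ = P (c * t) := by rw [bezier_bezier_left, hP, bezier]

theorem bezier_left_segment
    (d n : ℕ) (hd : 1 ≤ d) (W : ℕ → (Fin d → ℝ)) (c : ℝ)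
    (P : ℝ → (Fin d → ℝ))
    (hP : ∀ t : ℝ, P t = ∑ i ∈ Finset.range (n + 1), bern n i t • W i)
    (V : ℕ → (Fin d → ℝ))
    (hV : ∀ k ≤ n, V k = ∑ i ∈ Finset.range (k + 1), bern k i c • W i) :
    ∀ t : ℝ, ∑ k ∈ Finset.range (n + 1), bern n k t • V k = P (c * t) :=
  bezier_left_segment_general d n W c P hP V hV
end

section
/- Let n be a natural number and w_0, …, w_n real numbers, and let p(t) := Σ_{i=0}^{n} B^n_i(t) w_i be the corresponding polynomial of degree at most n. Then for every k with 0 ≤ k ≤ n, the k-th derivative of p at 1 equals (n!/(n-k)!) · Σ_{i=n-k}^{n} C(k,n-i) (-1)^{n-i} w_i. -/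
/-!
Re-expanded around `1`, the Bernstein polynomial `B^n_i` is
`C(n,i) (-1)^(n-i) (X + 1)^i X^(n-i)`, so its `k`-th derivative at `1` is `k!` times the
coefficient of `X^k` there, namely `k! C(n,i) (-1)^(n-i) C(i, k-(n-i))`, which vanishes for
`i < n - k`. The identity `C(n,i) C(i,n-k) = C(n,k) C(k,n-i)` turns this into
`n!/(n-k)! · C(k,n-i) (-1)^(n-i)`, and the theorem follows by linearity.
-/

open Polynomial Nat

theorem Polynomial.iteratedDeriv_eval {𝕜 : Type*} [NontriviallyNormedField 𝕜] (P : 𝕜[X])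
    (k : ℕ) :
    iteratedDeriv k (fun t => P.eval t) = fun t => (derivative^[k] P).eval t := by
  induction k with
  | zero => simp
  | succ k ih =>
    rw [iteratedDeriv_succ, ih, Function.iterate_succ_apply']
    funext t
    exact Polynomial.deriv _

theorem Polynomial.eval_iterate_derivative_eq_factorial_mul_coeff_taylor {R : Type*}
    [CommSemiring R] (P : R[X]) (r : R) (k : ℕ) :
    (derivative^[k] P).eval r = k ! * (taylor r P).coeff k := by
  rw [taylor_coeff, ← factorial_smul_hasseDeriv, LinearMap.smul_apply, eval_smul, nsmul_eq_mul]

theorem Nat.factorial_mul_choose_mul_choose {n k ν : ℕ} (hν : ν ≤ n) (hk : k ≤ n)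
    (h : n - ν ≤ k) :
    k ! * (n.choose ν * ν.choose (k - (n - ν))) = n.descFactorial k * k.choose (n - ν) := by
  rw [choose_symm_of_eq_add (show ν = k - (n - ν) + (n - k) by omega), choose_mul (by omega),
    choose_symm hk, show n - (n - k) = k by omega,
    choose_symm_of_eq_add (show k = ν - (n - k) + (n - ν) by omega),
    descFactorial_eq_factorial_mul_choose, mul_assoc]

namespace bernsteinPolynomial

variable {R : Type*} [CommRing R]

theorem taylor_one (n ν : ℕ) :
    taylor 1 (bernsteinPolynomial R n ν)
      = C (n.choose ν * (-1) ^ (n - ν) : R) * ((X + 1) ^ ν * X ^ (n - ν)) := by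
  simp only [bernsteinPolynomial, taylor_mul, taylor_pow, taylor_X, map_sub,
    Polynomial.taylor_one, ← C_eq_natCast, taylor_C, map_one, map_mul, map_pow, map_neg]
  ring

theorem eval_one_iterate_derivative {n ν k : ℕ} (hν : ν ≤ n) (hk : k ≤ n) (h : n - ν ≤ k) :
    (derivative^[k] (bernsteinPolynomial R n ν)).eval 1
      = n.descFactorial k * k.choose (n - ν) * (-1) ^ (n - ν) := by
  rw [eval_iterate_derivative_eq_factorial_mul_coeff_taylor, taylor_one, coeff_C_mul,
    coeff_mul_X_pow', if_pos h, coeff_X_add_one_pow]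
  have := congrArg (Nat.cast : ℕ → R) (Nat.factorial_mul_choose_mul_choose hν hk h)
  push_cast at this
  linear_combination (-1) ^ (n - ν) * this

end bernsteinPolynomial

theorem bern_eq_eval (n i : ℕ) (t : ℝ) : bern n i t = (bernsteinPolynomial ℝ n i).eval t := by
  simp [bern, bernsteinPolynomial]

theorem bezier_iteratedDeriv_at_one
    (n : ℕ) (w : ℕ → ℝ) (p : ℝ → ℝ)
    (hp : ∀ t : ℝ, p t = ∑ i ∈ Finset.range (n + 1), bern n i t * w i) :
    ∀ k ≤ n,
      iteratedDeriv k p 1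
        = ((Nat.factorial n : ℝ) / (Nat.factorial (n - k) : ℝ))
          * ∑ i ∈ Finset.Icc (n - k) n, (k.choose (n - i) : ℝ) * (-1) ^ (n - i) * w i := by
  intro k hk
  have hp_poly :
      p = fun t => (∑ i ∈ Finset.range (n + 1), w i • bernsteinPolynomial ℝ n i).eval t := by
    funext t
    simp only [hp, eval_finsetSum, eval_smul, bern_eq_eval, smul_eq_mul, mul_comm]
  have hdesc : (n ! : ℝ) / (n - k)! = n.descFactorial k := by
    rw [descFactorial_eq_div hk, Nat.cast_div (factorial_dvd_factorial (n.sub_le k))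
      (by positivity)]
  have hIcc : Finset.Icc (n - k) n ⊆ Finset.range (n + 1) := fun i hi => by
    simp only [Finset.mem_Icc, Finset.mem_range] at hi ⊢
    omega
  rw [hp_poly, iteratedDeriv_eval]
  beta_reduce
  rw [iterate_derivative_sum, eval_finsetSum, ← Finset.sum_subset hIcc, hdesc, Finset.mul_sum]
  · refine Finset.sum_congr rfl fun i hi => ?_
    rw [Finset.mem_Icc] at hi
    rw [iterate_derivative_smul, eval_smul,
      bernsteinPolynomial.eval_one_iterate_derivative hi.2 hk (by omega), smul_eq_mul]
    ring
  · intro i hi hi'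
    simp only [Finset.mem_range, Finset.mem_Icc] at hi hi'
    rw [iterate_derivative_smul, eval_smul,
      bernsteinPolynomial.iterate_derivative_at_1_eq_zero_of_lt ℝ n (by omega), smul_zero]
end
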